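/- A maximal outerplanar graph on n > 3 vertices has at least three vertices of degree 2 if and only if some inner triangle of its triangulation shares each of its three edges with another inner triangle (an 'internal' triangle). -/

import Mathlib

/-- A triangulation of a polygon, given by the cyclic list of its boundary
vertices (up to rotation) and the set of its triangles.  It is built by
repeatedly stacking an ear (a new vertex `v` inserted between two consecutive
boundary vertices `a`,`b`, together with the triangle `{a,v,b}`) onto a
single starting triangle. -/
inductive PolygonTriangulation : List ℕ → Finset (Finset ℕ) → Prop
  | base (a b c : ℕ) (h : ([a, b, c] : List ℕ).Nodup) :
      PolygonTriangulation [a, b, c] {({a, b, c} : Finset ℕ)}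
  | ear (l₁ l₂ : List ℕ) (a v b : ℕ) (T : Finset (Finset ℕ))
      (h : PolygonTriangulation (l₁ ++ a :: b :: l₂) T)
      (hv : v ∉ l₁ ++ a :: b :: l₂) :
      PolygonTriangulation (l₁ ++ a :: v :: b :: l₂) (insert {a, v, b} T)

/-- The (maximal outerplanar) graph of a triangulation: two distinct vertices
are adjacent iff they lie in a common triangle. -/
def triGraph (T : Finset (Finset ℕ)) : SimpleGraph ℕ where
  Adj u v := u ≠ v ∧ ∃ t ∈ T, u ∈ t ∧ v ∈ t
  symm := ⟨fun u v ⟨h, t, ht, hu, hv⟩ => ⟨h.symm, t, ht, hv, hu⟩⟩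
  loopless := ⟨fun u ⟨h, _⟩ => h rfl⟩

/-- Degree of a vertex in the graph of a triangulation. -/
noncomputable def triDeg (T : Finset (Finset ℕ)) (v : ℕ) : ℕ :=
  {u | (triGraph T).Adj v u}.ncard

/-- Degree of a triangle in the weak dual (number of other triangles sharing
an edge, i.e. two vertices, with it). -/
noncomputable def dualDeg (T : Finset (Finset ℕ)) (s : Finset ℕ) : ℕ :=
  {r | r ∈ T ∧ r ≠ s ∧ (r ∩ s).card = 2}.ncard

/-- The weak dual of a triangulation: vertices are the triangles, two
triangles adjacent iff they share an edge (two vertices). -/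
def dualGraph (T : Finset (Finset ℕ)) : SimpleGraph {t : Finset ℕ // t ∈ T} where
  Adj s t := s ≠ t ∧ ((s : Finset ℕ) ∩ (t : Finset ℕ)).card = 2
  symm := ⟨fun s t ⟨h, hc⟩ => ⟨h.symm, by rwa [Finset.inter_comm]⟩⟩
  loopless := ⟨fun s ⟨h, _⟩ => h rfl⟩

/-- Two vertices are cyclically adjacent on the boundary list `L`
(i.e. the pair is a polygon side, not a diagonal). -/
def CyclicAdj (L : List ℕ) (x y : ℕ) : Prop :=
  ∃ i : ℕ, i < L.length ∧
    ((L[i]? = some x ∧ L[(i + 1) % L.length]? = some y) ∨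
     (L[i]? = some y ∧ L[(i + 1) % L.length]? = some x))


/-!
Call a side of a triangle *outer* if no other triangle contains it. Gluing an ear `{a, v, b}` onto
the side `ab` of a triangle `t₀` adds a vertex and a triangle, turns the outer side `ab` of `t₀`
into an inner one and creates the two outer sides `av` and `vb`. By induction, a triangulation of
an `n`-gon therefore has `n - 2` triangles and `n` incidences between triangles and their outer
sides, and for `n ≥ 4` no triangle has three outer sides. If `k j` triangles have `j` outer sides,
then `k 0 + k 1 + k 2 = n - 2` and `k 1 + 2 k 2 = n`, whence `k 2 = k 0 + 2`. A vertex has degree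
two iff it lies in a single triangle, and these vertices are exactly the apices of the triangles
with two outer sides; so there are `k 0 + 2` of them, while `k 0` counts the internal triangles.
-/

theorem Finset.exists_eq_triple_of_card_eq_three {α : Type*} [DecidableEq α] {t : Finset α}
    {a b : α} (ht : t.card = 3) (ha : a ∈ t) (hb : b ∈ t) (hab : a ≠ b) :
    ∃ c, c ≠ a ∧ c ≠ b ∧ t = {a, b, c} := by
  have hb' : b ∈ t.erase a := mem_erase.2 ⟨hab.symm, hb⟩
  obtain ⟨c, hc⟩ := card_eq_one.1 <| by
    rw [card_erase_of_mem hb', card_erase_of_mem ha, ht]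
  have hc' : c ∈ (t.erase a).erase b := hc ▸ mem_singleton_self c
  refine ⟨c, ne_of_mem_erase (mem_of_mem_erase hc'), ne_of_mem_erase hc', ?_⟩
  rw [← insert_erase ha, ← insert_erase hb', hc]

theorem Finset.card_filter_eq_two_add_card {ι : Type*} (s : Finset ι) (f : ι → ℕ)
    (hf : ∀ i ∈ s, f i ≤ 2) :
    (s.filter (f · = 2)).card + s.card = (s.filter (f · = 0)).card + ∑ i ∈ s, f i := by
  rw [card_filter, card_filter, card_eq_sum_ones, ← sum_add_distrib, ← sum_add_distrib]
  refine sum_congr rfl fun i hi => ?_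
  have := hf i hi
  interval_cases f i <;> rfl

theorem List.infix_pair_of_infix_insert {α : Type*} {x y a v b : α} :
    ∀ {l₁ l₂ : List α}, [x, y] <:+: l₁ ++ a :: v :: b :: l₂ →
      [x, y] <:+: l₁ ++ [a] ∨ (x = a ∧ y = v) ∨ (x = v ∧ y = b) ∨ [x, y] <:+: b :: l₂
  | [], l₂, h => by
    simp only [List.nil_append, List.infix_cons_iff (l₂ := v :: b :: l₂),
      List.infix_cons_iff (l₂ := b :: l₂), List.cons_prefix_cons, List.nil_prefix, and_true] at h
    tauto
  | d :: l₁, l₂, h => by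
    rw [List.cons_append, List.infix_cons_iff] at h
    rcases h with h | h
    · refine Or.inl (List.IsPrefix.isInfix ?_)
      cases l₁ <;> simp_all
    · rcases List.infix_pair_of_infix_insert h with h | h
      · exact Or.inl (h.trans (List.suffix_cons d _).isInfix)
      · exact Or.inr h

def OnlyIn (T : Finset (Finset ℕ)) (e t : Finset ℕ) : Prop :=
  ∀ s ∈ T, e ⊆ s → s = t

open Classical in
/-- A side of `t` is recorded by the vertex of `t` opposite to it. -/
noncomputable def outerSides (T : Finset (Finset ℕ)) (t : Finset ℕ) : Finset ℕ :=
  t.filter fun z => OnlyIn T (t.erase z) t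

section Sides

variable {T : Finset (Finset ℕ)} {e e' s t : Finset ℕ}

theorem onlyIn_insert : OnlyIn (insert s T) e t ↔ (e ⊆ s → s = t) ∧ OnlyIn T e t :=
  Finset.forall_mem_insert _ _ _

theorem onlyIn_singleton : OnlyIn {t} e t := by
  simp [OnlyIn]

theorem OnlyIn.mono (h : OnlyIn T e t) (he : e ⊆ e') : OnlyIn T e' t :=
  fun s hs he's => h s hs (he.trans he's)

theorem mem_outerSides {z : ℕ} : z ∈ outerSides T t ↔ z ∈ t ∧ OnlyIn T (t.erase z) t := by
  classical
  simp [outerSides]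

theorem outerSides_subset : outerSides T t ⊆ t :=
  fun _ hz => (mem_outerSides.1 hz).1

theorem erase_subset_outerSides {w : ℕ} (hwt : w ∈ t) (hw : OnlyIn T {w} t) :
    t.erase w ⊆ outerSides T t := fun _ hz =>
  mem_outerSides.2 ⟨Finset.mem_of_mem_erase hz, hw.mono <| Finset.singleton_subset_iff.2 <|
    Finset.mem_erase.2 ⟨(Finset.ne_of_mem_erase hz).symm, hwt⟩⟩

theorem triDeg_eq_card (T : Finset (Finset ℕ)) (w : ℕ) :
    triDeg T w = (((T.filter (w ∈ ·)).biUnion id).erase w).card := by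
  rw [triDeg, ← Set.ncard_coe_finset]
  congr 1
  ext u
  simp only [triGraph, Set.mem_ofPred_eq, Finset.coe_erase, Finset.coe_biUnion, Finset.coe_filter,
    id, Set.mem_sdiff, Set.mem_iUnion, Finset.mem_coe, Set.mem_singleton_iff]
  constructor
  · rintro ⟨hwu, t, ht, hw, hu⟩
    exact ⟨⟨t, ⟨ht, hw⟩, hu⟩, Ne.symm hwu⟩
  · rintro ⟨⟨t, ⟨ht, hw⟩, hu⟩, hwu⟩
    exact ⟨Ne.symm hwu, t, ht, hw, hu⟩

theorem triDeg_eq_two_iff (hT : ∀ t ∈ T, t.card = 3) {w : ℕ} :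
    triDeg T w = 2 ↔ ∃ t ∈ T, w ∈ t ∧ OnlyIn T {w} t := by
  rw [triDeg_eq_card]
  set U := ((T.filter (w ∈ ·)).biUnion id).erase w
  have hsub : ∀ t ∈ T, w ∈ t → t.erase w ⊆ U := fun t ht hw =>
    Finset.erase_subset_erase _ (Finset.subset_biUnion_of_mem id (Finset.mem_filter.2 ⟨ht, hw⟩))
  have hcard : ∀ t ∈ T, w ∈ t → (t.erase w).card = 2 := fun t ht hw => by
    rw [Finset.card_erase_of_mem hw, hT t ht]
  constructor
  · intro hU
    obtain ⟨u, hu⟩ := Finset.card_pos.1 (hU.symm ▸ two_pos : 0 < U.card)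
    obtain ⟨t, htw, -⟩ := Finset.mem_biUnion.1 (Finset.mem_of_mem_erase hu)
    obtain ⟨ht, hw⟩ := Finset.mem_filter.1 htw
    have heq : ∀ s ∈ T, w ∈ s → s.erase w = U := fun s hs hws =>
      Finset.eq_of_subset_of_card_le (hsub s hs hws) (by rw [hU, hcard s hs hws])
    refine ⟨t, ht, hw, fun s hs hws => ?_⟩
    have hws := Finset.singleton_subset_iff.1 hws
    rw [← Finset.insert_erase hws, ← Finset.insert_erase hw, heq s hs hws, heq t ht hw]
  · rintro ⟨t, ht, hw, honly⟩
    have hU : U = t.erase w := by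
      refine Finset.Subset.antisymm (fun u hu => ?_) (hsub t ht hw)
      obtain ⟨hne, hu⟩ := Finset.mem_erase.1 hu
      obtain ⟨s, hsw, hus⟩ := Finset.mem_biUnion.1 hu
      obtain ⟨hs, hws⟩ := Finset.mem_filter.1 hsw
      exact Finset.mem_erase.2 ⟨hne, honly s hs (Finset.singleton_subset_iff.2 hws) ▸ hus⟩
    rw [hU, hcard t ht hw]

theorem outerSides_eq_empty_iff {t : Finset ℕ} (ht : t.card = 3) :
    outerSides T t = ∅ ↔ ∀ a ∈ t, ∀ b ∈ t, a ≠ b → ∃ s ∈ T, s ≠ t ∧ a ∈ s ∧ b ∈ s := by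
  rw [Finset.eq_empty_iff_forall_notMem]
  constructor
  · intro h a ha b hb hab
    obtain ⟨c, hca, hcb, rfl⟩ := Finset.exists_eq_triple_of_card_eq_three ht ha hb hab
    have hc : c ∈ ({a, b, c} : Finset ℕ) := by simp
    have := h c
    simp only [mem_outerSides, OnlyIn, hc, true_and, not_forall] at this
    obtain ⟨s, hs, hsub, hne⟩ := this
    exact ⟨s, hs, hne, hsub (by simp [hca.symm]), hsub (by simp [hcb.symm])⟩
  · intro h z hz
    obtain ⟨hzt, honly⟩ := mem_outerSides.1 hz
    obtain ⟨a, b, hab, hzt'⟩ := Finset.card_eq_two.1 (by rw [Finset.card_erase_of_mem hzt, ht] :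
      (t.erase z).card = 2)
    have ha : a ∈ t.erase z := by simp [hzt']
    have hb : b ∈ t.erase z := by simp [hzt']
    obtain ⟨s, hs, hne, has, hbs⟩ :=
      h a (Finset.mem_of_mem_erase ha) b (Finset.mem_of_mem_erase hb) hab
    exact hne (honly s hs (hzt' ▸ Finset.insert_subset has (Finset.singleton_subset_iff.2 hbs)))

theorem outerSides_eq_erase_iff {w : ℕ} (ht : t.card = 3)
    (hw : w ∈ t) : outerSides T t = t.erase w ↔ (outerSides T t).card = 2 ∧ w ∉ outerSides T t := by
  constructor
  · intro heq
    rw [heq, Finset.card_erase_of_mem hw, ht]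
    exact ⟨rfl, Finset.notMem_erase w t⟩
  · rintro ⟨hcard, hw'⟩
    refine Finset.eq_of_subset_of_card_le (fun z hz => Finset.mem_erase.2
      ⟨fun e => hw' (e ▸ hz), outerSides_subset hz⟩) ?_
    rw [Finset.card_erase_of_mem hw, ht, hcard]

end Sides

theorem outerSides_insert_of_not_subset {T : Finset (Finset ℕ)} {s t : Finset ℕ}
    (h : ∀ z ∈ t, ¬t.erase z ⊆ s) : outerSides (insert s T) t = outerSides T t := by
  ext z
  simp only [mem_outerSides, onlyIn_insert]
  exact ⟨fun ⟨hz, _, hT⟩ => ⟨hz, hT⟩, fun ⟨hz, hT⟩ => ⟨hz, fun hs => absurd hs (h z hz), hT⟩⟩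

theorem onlyIn_insert_self_of_fresh {T : Finset (Finset ℕ)} {e s : Finset ℕ} {v : ℕ}
    (hvT : ∀ r ∈ T, v ∉ r) (hve : v ∈ e) : OnlyIn (insert s T) e s :=
  onlyIn_insert.2 ⟨fun _ => rfl, fun r hr her => absurd (her hve) (hvT r hr)⟩

theorem outerSides_insert_self_of_fresh {T : Finset (Finset ℕ)} {s t : Finset ℕ} {v : ℕ}
    (hvT : ∀ r ∈ T, v ∉ r) (hvs : v ∈ s) (ht : t ∈ T) (hst : s.erase v ⊆ t) :
    outerSides (insert s T) s = s.erase v := by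
  ext z
  rw [mem_outerSides, Finset.mem_erase, and_comm (a := z ≠ v)]
  refine and_congr_right fun hz => ⟨fun honly hzv => ?_, fun hzv => ?_⟩
  · subst hzv
    exact hvT s (honly t (Finset.mem_insert_of_mem ht) hst ▸ ht) hvs
  · exact onlyIn_insert_self_of_fresh hvT (Finset.mem_erase.2 ⟨Ne.symm hzv, hvs⟩)

/-- The triangle `{a, v, b}` is about to be glued onto the side `{a, b}` of the triangle
`{a, b, c}` of `T`, with `v` a new vertex. -/
structure EarGluing (T : Finset (Finset ℕ)) (a b c v : ℕ) : Prop where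
  card_eq_three : ∀ t ∈ T, t.card = 3
  not_mem : ∀ t ∈ T, v ∉ t
  mem : {a, b, c} ∈ T
  onlyIn : OnlyIn T {a, b} {a, b, c}
  ne_ab : a ≠ b
  ne_ca : c ≠ a
  ne_cb : c ≠ b

namespace EarGluing

variable {T : Finset (Finset ℕ)} {a b c v : ℕ}

theorem ne_va (h : EarGluing T a b c v) : v ≠ a :=
  fun e => h.not_mem _ h.mem (by simp [e])

theorem ne_vb (h : EarGluing T a b c v) : v ≠ b :=
  fun e => h.not_mem _ h.mem (by simp [e])

theorem ne_vc (h : EarGluing T a b c v) : v ≠ c :=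
  fun e => h.not_mem _ h.mem (by simp [e])

theorem new_notMem (h : EarGluing T a b c v) : ({a, v, b} : Finset ℕ) ∉ T :=
  fun hm => h.not_mem _ hm (by simp)

theorem card_new (h : EarGluing T a b c v) : ({a, v, b} : Finset ℕ).card = 3 :=
  Finset.card_eq_three.2 ⟨a, v, b, h.ne_va.symm, h.ne_ab, h.ne_vb, rfl⟩

theorem eq_of_erase_subset (h : EarGluing T a b c v) {t : Finset ℕ} (ht : t ∈ T) {z : ℕ}
    (hz : z ∈ t) (hsub : t.erase z ⊆ {a, v, b}) : t = {a, b, c} := by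
  have hsub' : t.erase z ⊆ {a, b} := fun x hx => by
    have hxv : x ≠ v := fun e => h.not_mem t ht (e ▸ Finset.mem_of_mem_erase hx)
    have := hsub hx
    simp only [Finset.mem_insert, Finset.mem_singleton, hxv, false_or] at this ⊢
    exact this
  have heq : t.erase z = {a, b} := Finset.eq_of_subset_of_card_le hsub' <| by
    rw [Finset.card_erase_of_mem hz, h.card_eq_three t ht]
    exact Finset.card_le_two
  exact h.onlyIn t ht (heq ▸ Finset.erase_subset z t)

theorem outerSides_insert_of_ne (h : EarGluing T a b c v) {t : Finset ℕ} (ht : t ∈ T)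
    (hne : t ≠ {a, b, c}) : outerSides (insert {a, v, b} T) t = outerSides T t :=
  outerSides_insert_of_not_subset fun _ hz hsub => hne (h.eq_of_erase_subset ht hz hsub)

theorem outerSides_insert_new (h : EarGluing T a b c v) :
    outerSides (insert {a, v, b} T) {a, v, b} = ({a, v, b} : Finset ℕ).erase v :=
  outerSides_insert_self_of_fresh h.not_mem (by simp) h.mem fun x hx => by
    simp only [Finset.mem_erase, Finset.mem_insert, Finset.mem_singleton] at hx ⊢
    tauto

theorem mem_outerSides_old (h : EarGluing T a b c v) : c ∈ outerSides T {a, b, c} :=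
  mem_outerSides.2 ⟨by simp, h.onlyIn.mono fun x hx => by
    simp only [Finset.mem_insert, Finset.mem_singleton] at hx
    rcases hx with rfl | rfl
    · simp [h.ne_ca.symm]
    · simp [h.ne_cb.symm]⟩

theorem outerSides_insert_old (h : EarGluing T a b c v) :
    outerSides (insert {a, v, b} T) {a, b, c} = (outerSides T {a, b, c}).erase c := by
  have hne : ({a, v, b} : Finset ℕ) ≠ {a, b, c} := fun e => h.new_notMem (e ▸ h.mem)
  have hc : c ∉ ({a, v, b} : Finset ℕ) := by simp [h.ne_ca, h.ne_cb, h.ne_vc.symm]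
  ext z
  rw [Finset.mem_erase, mem_outerSides, mem_outerSides, onlyIn_insert]
  constructor
  · rintro ⟨hz, hsub, honly⟩
    refine ⟨fun hzc => hne (hsub ?_), hz, honly⟩
    intro x hx
    simp only [Finset.mem_erase, Finset.mem_insert, Finset.mem_singleton, hzc] at hx ⊢
    tauto
  · rintro ⟨hzc, hz, honly⟩
    exact ⟨hz, fun hsub => absurd (hsub (Finset.mem_erase.2 ⟨Ne.symm hzc, by simp⟩)) hc, honly⟩

theorem sum_card_outerSides_insert (h : EarGluing T a b c v) :
    ∑ t ∈ insert {a, v, b} T, (outerSides (insert {a, v, b} T) t).card =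
      ∑ t ∈ T, (outerSides T t).card + 1 := by
  have hold := Finset.card_pos.2 ⟨c, h.mem_outerSides_old⟩
  have hrest : ∑ t ∈ T.erase {a, b, c}, (outerSides (insert {a, v, b} T) t).card =
      ∑ t ∈ T.erase {a, b, c}, (outerSides T t).card := Finset.sum_congr rfl fun t ht => by
    rw [h.outerSides_insert_of_ne (Finset.mem_of_mem_erase ht) (Finset.ne_of_mem_erase ht)]
  rw [Finset.sum_insert h.new_notMem, ← Finset.add_sum_erase T _ h.mem,
    ← Finset.add_sum_erase T _ h.mem, hrest, h.outerSides_insert_new, h.outerSides_insert_old,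
    Finset.card_erase_of_mem (by simp), h.card_new,
    Finset.card_erase_of_mem h.mem_outerSides_old]
  omega

theorem card_outerSides_insert_le (h : EarGluing T a b c v)
    (hle : ∀ t ∈ T, t ≠ {a, b, c} → (outerSides T t).card ≤ 2) :
    ∀ t ∈ insert {a, v, b} T, (outerSides (insert {a, v, b} T) t).card ≤ 2 := by
  intro t ht
  rcases Finset.mem_insert.1 ht with rfl | ht
  · rw [h.outerSides_insert_new, Finset.card_erase_of_mem (by simp), h.card_new]
  by_cases hne : t = {a, b, c}
  · subst hne
    rw [h.outerSides_insert_old, Finset.card_erase_of_mem h.mem_outerSides_old]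
    have := Finset.card_le_card (outerSides_subset (T := T) (t := {a, b, c}))
    rw [h.card_eq_three _ h.mem] at this
    omega
  · rw [h.outerSides_insert_of_ne ht hne]
    exact hle t ht hne

theorem onlyIn_apex_insert (h : EarGluing T a b c v)
    (hapex : ∀ t ∈ T, ∀ w ∈ t, t.erase w ⊆ outerSides T t → OnlyIn T {w} t) :
    ∀ t ∈ insert {a, v, b} T, ∀ w ∈ t, t.erase w ⊆ outerSides (insert {a, v, b} T) t →
      OnlyIn (insert {a, v, b} T) {w} t := by
  intro t ht w hw hsub
  rcases Finset.mem_insert.1 ht with rfl | ht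
  · rw [h.outerSides_insert_new] at hsub
    have hwv : w = v := by
      by_contra hwv
      simpa using hsub (Finset.mem_erase.2 ⟨Ne.symm hwv, by simp⟩)
    exact onlyIn_insert_self_of_fresh h.not_mem (hwv ▸ Finset.mem_singleton_self w)
  rw [onlyIn_insert, Finset.singleton_subset_iff]
  by_cases hne : t = {a, b, c}
  · subst hne
    rw [h.outerSides_insert_old] at hsub
    have hwc : w = c := by
      by_contra hwc
      simpa using hsub (Finset.mem_erase.2 ⟨Ne.symm hwc, by simp⟩)
    subst hwc
    refine ⟨fun hw' => ?_, hapex _ h.mem w hw (hsub.trans (Finset.erase_subset _ _))⟩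
    simp [h.ne_ca, h.ne_cb, h.ne_vc.symm] at hw'
  · rw [h.outerSides_insert_of_ne ht hne] at hsub
    have honly := hapex t ht w hw hsub
    refine ⟨fun hw' => absurd (honly _ h.mem ?_).symm hne, honly⟩
    have hwv : w ≠ v := fun e => h.not_mem t ht (e ▸ hw)
    simp only [Finset.mem_insert, Finset.mem_singleton, hwv, false_or] at hw'
    rcases hw' with rfl | rfl <;> simp

end EarGluing

/-- Of the polygon sides, only those joining consecutive entries of `L` are tracked: ears are
never glued onto the closing side from the last entry to the first. -/
structure TriangulationInvariants (L : List ℕ) (T : Finset (Finset ℕ)) : Prop where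
  nodup : L.Nodup
  card_eq_three : ∀ t ∈ T, t.card = 3
  mem_of_mem_triangle : ∀ t ∈ T, ∀ x ∈ t, x ∈ L
  card_add_two : T.card + 2 = L.length
  onlyIn_side : ∀ a b, [a, b] <:+: L → ∃ t ∈ T, {a, b} ⊆ t ∧ OnlyIn T {a, b} t
  onlyIn_apex : ∀ t ∈ T, ∀ w ∈ t, t.erase w ⊆ outerSides T t → OnlyIn T {w} t
  sum_card_outerSides : ∑ t ∈ T, (outerSides T t).card = L.length
  card_outerSides_le : 3 < L.length → ∀ t ∈ T, (outerSides T t).card ≤ 2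

namespace TriangulationInvariants

theorem triangle {a b c : ℕ} (h : [a, b, c].Nodup) :
    TriangulationInvariants [a, b, c] {{a, b, c}} := by
  have hne : a ≠ b ∧ a ≠ c ∧ b ≠ c := by simp at h; tauto
  have hcard : ({a, b, c} : Finset ℕ).card = 3 :=
    Finset.card_eq_three.2 ⟨a, b, c, hne.1, hne.2.1, hne.2.2, rfl⟩
  have houter : outerSides {{a, b, c}} {a, b, c} = {a, b, c} :=
    Finset.Subset.antisymm outerSides_subset fun z hz => mem_outerSides.2 ⟨hz, onlyIn_singleton⟩
  refine ⟨h, by simpa using hcard, by simp, by simp, fun x y hxy => ?_, ?_, by simp [houter, hcard],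
    by simp⟩
  · have hx := hxy.subset (List.mem_cons_self ..)
    have hy := hxy.subset (List.mem_cons_of_mem _ (List.mem_cons_self ..))
    exact ⟨_, Finset.mem_singleton_self _,
      Finset.insert_subset (by simpa using hx) (Finset.singleton_subset_iff.2 (by simpa using hy)),
      onlyIn_singleton⟩
  · intro t ht _ _ _
    rw [Finset.mem_singleton.1 ht]
    exact onlyIn_singleton

theorem onlyIn_side_glue {l₁ l₂ : List ℕ} {a v b : ℕ} {T : Finset (Finset ℕ)}
    (h : TriangulationInvariants (l₁ ++ a :: b :: l₂) T) (hv : v ∉ l₁ ++ a :: b :: l₂)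
    (hvT : ∀ t ∈ T, v ∉ t) (x y : ℕ) (hxy : [x, y] <:+: l₁ ++ a :: v :: b :: l₂) :
    ∃ t ∈ insert {a, v, b} T, {x, y} ⊆ t ∧ OnlyIn (insert {a, v, b} T) {x, y} t := by
  have hsplit := List.nodup_append.1 (List.append_cons l₁ a (b :: l₂) ▸ h.nodup)
  have hold_side : ∀ p q, [p, q] <:+: l₁ ++ a :: b :: l₂ → (a ∉ [p, q] ∨ b ∉ [p, q]) →
      ∃ t ∈ insert {a, v, b} T, {p, q} ⊆ t ∧ OnlyIn (insert {a, v, b} T) {p, q} t := by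
    intro p q hpq hnab
    obtain ⟨t, ht, hpqt, honly⟩ := h.onlyIn_side p q hpq
    refine ⟨t, Finset.mem_insert_of_mem ht, hpqt, onlyIn_insert.2 ⟨fun hsub => ?_, honly⟩⟩
    have hne : p ≠ q := by simpa using h.nodup.sublist hpq.sublist
    have hp : p ≠ v := fun e => hv (e ▸ hpq.subset (by simp))
    have hq : q ≠ v := fun e => hv (e ▸ hpq.subset (by simp))
    have hpab : p = a ∨ p = b := by simpa [hp] using hsub (by simp : p ∈ ({p, q} : Finset ℕ))
    have hqab : q = a ∨ q = b := by simpa [hq] using hsub (by simp : q ∈ ({p, q} : Finset ℕ))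
    simp only [List.mem_cons, List.not_mem_nil, or_false] at hnab
    omega
  rcases List.infix_pair_of_infix_insert hxy with hxy | ⟨rfl, rfl⟩ | ⟨rfl, rfl⟩ | hxy
  · refine hold_side x y (hxy.trans ?_) (Or.inr fun hb => ?_)
    · rw [List.append_cons l₁ a (b :: l₂)]
      exact (List.prefix_append _ _).isInfix
    · exact hsplit.2.2 b (hxy.subset hb) b List.mem_cons_self rfl
  · exact ⟨_, Finset.mem_insert_self _ _, by simp,
      onlyIn_insert_self_of_fresh hvT (by simp)⟩
  · exact ⟨_, Finset.mem_insert_self _ _, by simp,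
      onlyIn_insert_self_of_fresh hvT (by simp)⟩
  · refine hold_side x y
      (hxy.trans ((List.suffix_cons a _).trans (List.suffix_append l₁ _)).isInfix)
      (Or.inl fun ha => ?_)
    exact hsplit.2.2 a (by simp) a (hxy.subset ha) rfl

theorem glue {l₁ l₂ : List ℕ} {a v b : ℕ} {T : Finset (Finset ℕ)}
    (h : TriangulationInvariants (l₁ ++ a :: b :: l₂) T) (hv : v ∉ l₁ ++ a :: b :: l₂) :
    TriangulationInvariants (l₁ ++ a :: v :: b :: l₂) (insert {a, v, b} T) := by
  have hab : a ≠ b := by simpa using h.nodup.sublist (List.infix_append' l₁ [a, b] l₂).sublist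
  obtain ⟨t, ht, habt, honly⟩ := h.onlyIn_side a b (List.infix_append' l₁ [a, b] l₂)
  obtain ⟨c, hca, hcb, rfl⟩ := Finset.exists_eq_triple_of_card_eq_three (h.card_eq_three t ht)
    (habt (by simp)) (habt (by simp)) hab
  have g : EarGluing T a b c v := ⟨h.card_eq_three,
    fun t ht hvt => hv (h.mem_of_mem_triangle t ht v hvt), ht, honly, hab, hca, hcb⟩
  have hlen : (l₁ ++ a :: v :: b :: l₂).length = (l₁ ++ a :: b :: l₂).length + 1 := by simp; omega
  refine ⟨?_, ?_, ?_, ?_, h.onlyIn_side_glue hv g.not_mem, g.onlyIn_apex_insert h.onlyIn_apex, ?_,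
    fun _ => ?_⟩
  · rw [List.append_cons l₁ a, List.nodup_middle, List.nodup_cons, ← List.append_cons]
    exact ⟨hv, h.nodup⟩
  · intro t ht
    rcases Finset.mem_insert.1 ht with rfl | ht
    exacts [g.card_new, h.card_eq_three t ht]
  · intro t ht x hx
    rcases Finset.mem_insert.1 ht with rfl | ht
    · simp only [Finset.mem_insert, Finset.mem_singleton] at hx
      rcases hx with rfl | rfl | rfl <;> simp
    · have := h.mem_of_mem_triangle t ht x hx
      simp only [List.mem_append, List.mem_cons] at this ⊢
      tauto
  · rw [Finset.card_insert_of_notMem g.new_notMem, hlen, ← h.card_add_two]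
  · rw [g.sum_card_outerSides_insert, h.sum_card_outerSides, hlen]
  · refine g.card_outerSides_insert_le fun t ht hne => ?_
    rcases Nat.lt_or_ge 3 (l₁ ++ a :: b :: l₂).length with hn | hn
    · exact h.card_outerSides_le hn t ht
    · exact absurd (Finset.card_le_one.1 (by have := h.card_add_two; omega) t ht _ g.mem) hne

end TriangulationInvariants

theorem PolygonTriangulation.invariants {L : List ℕ} {T : Finset (Finset ℕ)}
    (h : PolygonTriangulation L T) : TriangulationInvariants L T := by
  induction h with
  | base a b c h => exact .triangle h
  | ear l₁ l₂ a v b T _ hv ih => exact ih.glue hv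

namespace TriangulationInvariants

variable {L : List ℕ} {T : Finset (Finset ℕ)}

theorem onlyIn_singleton_iff (h : TriangulationInvariants L T) (hn : 3 < L.length)
    {t : Finset ℕ} (ht : t ∈ T) {w : ℕ} (hw : w ∈ t) :
    OnlyIn T {w} t ↔ (outerSides T t).card = 2 ∧ w ∉ outerSides T t := by
  rw [← outerSides_eq_erase_iff (h.card_eq_three t ht) hw]
  refine ⟨fun honly => ?_, fun heq => h.onlyIn_apex t ht w hw heq.ge⟩
  refine (Finset.eq_of_subset_of_card_le (erase_subset_outerSides hw honly) ?_).symm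
  rw [Finset.card_erase_of_mem hw, h.card_eq_three t ht]
  exact h.card_outerSides_le hn t ht

theorem setOf_triDeg_eq_two (h : TriangulationInvariants L T) (hn : 3 < L.length) :
    {w | w ∈ L ∧ triDeg T w = 2} =
      ↑((T.filter fun t => (outerSides T t).card = 2).biUnion fun t => t \ outerSides T t) := by
  ext w
  simp only [Set.mem_ofPred_eq, triDeg_eq_two_iff h.card_eq_three, Finset.coe_biUnion,
    Finset.coe_filter, Set.mem_iUnion, Finset.mem_coe, Finset.mem_sdiff, exists_prop]
  constructor
  · rintro ⟨-, t, ht, hw, honly⟩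
    obtain ⟨hcard, hw'⟩ := (h.onlyIn_singleton_iff hn ht hw).1 honly
    exact ⟨t, ⟨ht, hcard⟩, hw, hw'⟩
  · rintro ⟨t, ⟨ht, hcard⟩, hw, hw'⟩
    exact ⟨h.mem_of_mem_triangle t ht w hw, t, ht, hw,
      (h.onlyIn_singleton_iff hn ht hw).2 ⟨hcard, hw'⟩⟩

theorem ncard_setOf_triDeg_eq_two (h : TriangulationInvariants L T) (hn : 3 < L.length) :
    {w | w ∈ L ∧ triDeg T w = 2}.ncard = (T.filter fun t => (outerSides T t).card = 2).card := by
  rw [h.setOf_triDeg_eq_two hn, Set.ncard_coe_finset, Finset.card_biUnion, Finset.card_eq_sum_ones]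
  · refine Finset.sum_congr rfl fun t ht => ?_
    obtain ⟨ht, hcard⟩ := Finset.mem_filter.1 ht
    rw [Finset.card_sdiff_of_subset outerSides_subset, h.card_eq_three t ht, hcard]
  · intro t ht s hs hne
    refine Finset.disjoint_left.2 fun w hwt hws => hne ?_
    obtain ⟨ht, hcard⟩ := Finset.mem_filter.1 ht
    obtain ⟨hs, -⟩ := Finset.mem_filter.1 hs
    obtain ⟨hwt, hwt'⟩ := Finset.mem_sdiff.1 hwt
    obtain ⟨hws, -⟩ := Finset.mem_sdiff.1 hws
    have honly := (h.onlyIn_singleton_iff hn ht hwt).2 ⟨hcard, hwt'⟩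
    exact (honly s hs (Finset.singleton_subset_iff.2 hws)).symm

theorem card_filter_two_eq (h : TriangulationInvariants L T) (hn : 3 < L.length) :
    (T.filter fun t => (outerSides T t).card = 2).card =
      (T.filter fun t => (outerSides T t).card = 0).card + 2 := by
  have := Finset.card_filter_eq_two_add_card T _ (h.card_outerSides_le hn)
  have := h.card_add_two
  have := h.sum_card_outerSides
  omega

end TriangulationInvariants

/-- A maximal outerplanar graph on `n > 3` vertices has at least three vertices
of degree 2 iff some triangle of its triangulation is internal, i.e. shares each
of its three edges with another triangle. -/
theorem three_ears_iff_internal_triangle (L : List ℕ) (T : Finset (Finset ℕ))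
    (h : PolygonTriangulation L T) (hn : 3 < L.length) :
    3 ≤ {v : ℕ | v ∈ L ∧ triDeg T v = 2}.ncard ↔
      ∃ t ∈ T, ∀ a ∈ t, ∀ b ∈ t, a ≠ b →
        ∃ s ∈ T, s ≠ t ∧ a ∈ s ∧ b ∈ s := by
  have hI := h.invariants
  rw [hI.ncard_setOf_triDeg_eq_two hn, hI.card_filter_two_eq hn,
    (by omega : ∀ k : ℕ, 3 ≤ k + 2 ↔ 0 < k), Finset.card_pos, Finset.filter_nonempty_iff]
  refine exists_congr fun t => and_congr_right fun ht => ?_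
  rw [Finset.card_eq_zero, outerSides_eq_empty_iff (hI.card_eq_three t ht)]
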